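/- In the setting of the recursive construction of τ for a Hermitian star product ⋆ on ℝ^n: if τ₀ = π* and τ₁,…,τ_{k−1} ∈ HC^1(C^∞(ℝ^n,ℂ), W) satisfy τ_i* = τ_i for all i (where φ*(f) := conj(φ(conj f))), then the cochain R_k(f,g) = Σ_{i=0}^{k−1} λ^{k−i} τ_i(C_{k−i}(f,g)) − Σ_{i=1}^{k−1} τ_i(f) ⋆_W τ_{k−i}(g) is Hermitian: R_k*(f,g) := conj(R_k(conj g, conj f)) = R_k(f,g). -/

import Mathlib

set_option synthInstance.maxHeartbeats 1000000
set_option maxHeartbeats 1000000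

open scoped BigOperators

noncomputable section

/-- The subalgebra of smooth complex-valued functions on `ℝⁿ`. -/
def smoothSubalgebra (n : ℕ) : Subalgebra ℂ ((Fin n → ℝ) → ℂ) where
  carrier := {f | ContDiff ℝ (⊤ : ℕ∞) f}
  mul_mem' hf hg := by simp only [Set.mem_setOf_eq] at *; exact hf.mul hg
  add_mem' hf hg := by simp only [Set.mem_setOf_eq] at *; exact hf.add hg
  algebraMap_mem' c := by
    show ContDiff ℝ (⊤ : ℕ∞) (fun _ => c)
    exact contDiff_const

/-- `C^∞(ℝⁿ, ℂ)` as a commutative `ℂ`-algebra. -/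
abbrev Cinf (n : ℕ) : Type := smoothSubalgebra n

theorem Cinf.smooth {n : ℕ} (f : Cinf n) : ContDiff ℝ (⊤ : ℕ∞) f.1 := f.2

/-- Complex conjugation as the `*`-involution on `C^∞(ℝⁿ, ℂ)`. -/
instance (n : ℕ) : StarRing (Cinf n) where
  star f := ⟨fun x => (starRingEnd ℂ) (f.1 x), by
    exact Complex.conjCLE.toContinuousLinearMap.contDiff.comp f.smooth⟩
  star_involutive f := Subtype.ext (funext fun x => by simp)
  star_mul f g := Subtype.ext (funext fun x => by
    simp only [MulMemClass.coe_mul, Pi.mul_apply, map_mul]; ring)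
  star_add f g := Subtype.ext (funext fun x => by
    simp only [AddMemClass.coe_add, Pi.add_apply, map_add])

/-- The partial derivative `∂/∂qᵏ` on smooth functions. -/
def pderivQ {n : ℕ} (k : Fin n) (f : Cinf n) : Cinf n :=
  ⟨fun x => fderiv ℝ f.1 x (Pi.single k 1), by
    exact (f.smooth.fderiv_right (m := (⊤ : ℕ∞)) (by norm_cast)).clm_apply contDiff_const⟩

/-- `W₀ = C^∞(ℝⁿ,ℂ)[[p₁,…,pₙ]]`. -/
abbrev W0 (n : ℕ) : Type := MvPowerSeries (Fin n) (Cinf n)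

/-- `W = W₀[[λ]]`. -/
abbrev Wf (n : ℕ) : Type := PowerSeries (W0 n)

/-- `∂/∂qᵏ` on `W₀`, acting on the smooth coefficients. -/
def Dq {n : ℕ} (k : Fin n) (a : W0 n) : W0 n := fun m => pderivQ k (a m)

/-- The formal partial derivative `∂/∂pₖ` on `W₀`. -/
def Dp {n : ℕ} (k : Fin n) (a : W0 n) : W0 n :=
  fun m => (m k + 1 : ℕ) • a (m + Finsupp.single k 1)

/-- The natural inclusion `π* : C^∞(ℝⁿ) → W₀`. -/
def piW0 {n : ℕ} (f : Cinf n) : W0 n := MvPowerSeries.C f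

/-- The natural inclusion `π* : C^∞(ℝⁿ) → W`. -/
def piW {n : ℕ} (f : Cinf n) : Wf n := PowerSeries.C (piW0 f)

/-- One factor of the bidifferential operator
`P = Σₖ (∂_{qᵏ} ⊗ ∂_{pₖ} − ∂_{pₖ} ⊗ ∂_{qᵏ})`: the derivative hitting the first
tensor factor (`true` records the summand `∂_{qᵏ} ⊗ ∂_{pₖ}`). -/
def fstDeriv {n : ℕ} : Fin n × Bool → W0 n → W0 n
  | (k, true) => Dq k
  | (k, false) => Dp k

/-- The derivative hitting the second tensor factor. -/
def sndDeriv {n : ℕ} : Fin n × Bool → W0 n → W0 n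
  | (k, true) => Dp k
  | (k, false) => Dq k

/-- The sign of each summand of `P`. -/
def pSign {n : ℕ} : Fin n × Bool → ℂ := fun kb => if kb.2 then 1 else -1

/-- Iterated application of the first-factor derivatives along a sequence `t`. -/
def iterFst {n r : ℕ} (t : Fin r → Fin n × Bool) (a : W0 n) : W0 n :=
  (List.ofFn t).foldr (fun kb x => fstDeriv kb x) a

/-- Iterated application of the second-factor derivatives along a sequence `t`. -/
def iterSnd {n r : ℕ} (t : Fin r → Fin n × Bool) (a : W0 n) : W0 n :=
  (List.ofFn t).foldr (fun kb x => sndDeriv kb x) a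

/-- `μ ∘ Pʳ (a ⊗ b)`: the `r`-th power of the Poisson bidifferential operator
`P = Σₖ (∂_{qᵏ} ⊗ ∂_{pₖ} − ∂_{pₖ} ⊗ ∂_{qᵏ})` followed by the (undeformed)
multiplication `μ`. -/
def moyalP {n : ℕ} (r : ℕ) (a b : W0 n) : W0 n :=
  ∑ t : Fin r → Fin n × Bool,
    (∏ j, pSign (t j)) • (iterFst t a * iterSnd t b)

/-- The formal Weyl–Moyal star product
`a ⋆_W b = μ ∘ exp((iλ/2) Σₖ (∂_{qᵏ} ⊗ ∂_{pₖ} − ∂_{pₖ} ⊗ ∂_{qᵏ}))(a ⊗ b)`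
on `W = W₀[[λ]]`. -/
def weylMul {n : ℕ} (a b : Wf n) : Wf n :=
  PowerSeries.mk fun ℓ => ∑ p ∈ Finset.HasAntidiagonal.antidiagonal ℓ, ∑ q ∈ Finset.HasAntidiagonal.antidiagonal p.2,
    ((Complex.I / 2) ^ p.1 / (p.1.factorial : ℂ)) •
      moyalP p.1 (PowerSeries.coeff q.1 a) (PowerSeries.coeff q.2 b)

/-- Complex conjugation on `W₀` (the formal variables `p` are treated as real). -/
def starW0 {n : ℕ} (a : W0 n) : W0 n := fun m => star (a m)

/-- Complex conjugation on `W = W₀[[λ]]` (`λ` and the `p`'s are treated as real). -/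
def starWf {n : ℕ} (w : Wf n) : Wf n :=
  PowerSeries.mk fun ℓ => starW0 (PowerSeries.coeff ℓ w)

/-- The classical limit `cl : W → W₀`, setting `λ = 0`. -/
def clW {n : ℕ} (w : Wf n) : W0 n := PowerSeries.coeff 0 w

/-- The action of a formal series `c ∈ ℂ[[λ]]` on `W`, making `W` a
`ℂ[[λ]]`-module (the element `c(λ)·1` is central, so deformed and undeformed
multiplication by it agree). -/
def lamSmulW {n : ℕ} (c : PowerSeries ℂ) (w : Wf n) : Wf n :=
  PowerSeries.map (algebraMap ℂ (W0 n)) c * w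

/-- The action of `c ∈ ℂ[[λ]]` on `C^∞(ℝⁿ)[[λ]]`. -/
def lamSmulS {n : ℕ} (c : PowerSeries ℂ) (g : PowerSeries (Cinf n)) : PowerSeries (Cinf n) :=
  PowerSeries.map (algebraMap ℂ (Cinf n)) c * g

end
/-! ### Generic algebraic notions: differential operators, Hochschild cochains,
formal deformations and positive functionals. -/

/-- Grothendieck's algebraic notion of a differential operator of order at most `k`
from a commutative ring `A` to a module `M`, with the action of `A` on `M` given
explicitly by `sm`.  An operator of order `≤ 0` is a module map, and `D` has order
`≤ k+1` if all the commutators `[D, a]` have order `≤ k`. -/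
def IsDiffOpLE {A : Type*} [CommRing A] {M : Type*} [AddCommGroup M]
    (sm : A → M → M) : ℕ → (A → M) → Prop
  | 0 => fun D => ∀ a x, D (a * x) = sm a (D x)
  | (k+1) => fun D => ∀ a, IsDiffOpLE sm k fun x => D (a * x) - sm a (D x)

/-- `D : A → M` is a differential operator if it has some finite order. -/
def IsDiffOp {A : Type*} [CommRing A] {M : Type*} [AddCommGroup M]
    (sm : A → M → M) (D : A → M) : Prop :=
  ∃ k, IsDiffOpLE sm k D

/-- The tuple obtained from `f : Fin (k+1) → A` by multiplying the `i`-th and the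
`(i+1)`-st entries. -/
def mergeAt {A : Type*} [Mul A] {k : ℕ} (f : Fin (k + 1) → A) (i : Fin k) : Fin k → A :=
  fun j =>
    if (j : ℕ) < (i : ℕ) then f j.castSucc
    else if (j : ℕ) = (i : ℕ) then f i.castSucc * f i.succ
    else f j.succ

/-- The Hochschild coboundary operator on `k`-cochains of a commutative ring `A` with
values in an `(A,A)`-bimodule `M`, whose left and right actions are given explicitly by
`L` and `R`:
`(δφ)(f₀,…,f_k) = f₀·φ(f₁,…,f_k) + Σᵢ (−1)^{i+1} φ(f₀,…,fᵢfᵢ₊₁,…,f_k) + (−1)^{k+1} φ(f₀,…,f_{k−1})·f_k`. -/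
def hDelta {A : Type*} [CommRing A] {M : Type*} [AddCommGroup M]
    (L : A → M → M) (R : M → A → M) {k : ℕ} (φ : (Fin k → A) → M) :
    (Fin (k + 1) → A) → M := fun f =>
  L (f 0) (φ fun i => f i.succ)
    + ∑ i : Fin k, (-1 : ℤ) ^ ((i : ℕ) + 1) • φ (mergeAt f i)
    + (-1 : ℤ) ^ (k + 1) • R (φ fun i => f i.castSucc) (f (Fin.last k))

/-- A `k`-multilinear cochain (over `ℂ`). -/
def IsMultilinC {A : Type*} [CommRing A] [Algebra ℂ A] {M : Type*} [AddCommGroup M]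
    [Module ℂ M] {k : ℕ} (φ : (Fin k → A) → M) : Prop :=
  (∀ (f : Fin k → A) (i : Fin k) (x y : A),
      φ (Function.update f i (x + y)) = φ (Function.update f i x) + φ (Function.update f i y)) ∧
  (∀ (f : Fin k → A) (i : Fin k) (c : ℂ) (x : A),
      φ (Function.update f i (c • x)) = c • φ (Function.update f i x))

/-- The total antisymmetrization operator on `k`-cochains. -/
noncomputable def altC {A : Type*} {M : Type*} [AddCommGroup M] [Module ℂ M] {k : ℕ}
    (φ : (Fin k → A) → M) : (Fin k → A) → M := fun f =>
  (k.factorial : ℂ)⁻¹ • ∑ σ : Equiv.Perm (Fin k), ((Equiv.Perm.sign σ : ℤ)) • φ (f ∘ σ)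

/-- The formal deformation `F ⋆ G = Σₙ λⁿ Σ_{r+i+j=n} C_r(F_i, G_j)` of an algebra `A`
determined by a family of "cochains" `C_r : A × A → A`, where `C_0` is meant to be the
undeformed product.  This is the general form of a star product. -/
noncomputable def starMulC {A : Type*} [Ring A] (C : ℕ → A → A → A) (F G : PowerSeries A) :
    PowerSeries A :=
  PowerSeries.mk fun ℓ => ∑ p ∈ Finset.HasAntidiagonal.antidiagonal ℓ, ∑ q ∈ Finset.HasAntidiagonal.antidiagonal p.2,
    C p.1 (PowerSeries.coeff q.1 F) (PowerSeries.coeff q.2 G)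

/-- The coefficientwise involution on `A[[λ]]` (the formal parameter `λ` is real). -/
noncomputable def starSeries {A : Type*} [Semiring A] [Star A] (F : PowerSeries A) :
    PowerSeries A :=
  PowerSeries.mk fun ℓ => star (PowerSeries.coeff ℓ F)

/-- `C` is a (bidifferential) star product on the commutative `ℂ`-algebra `A`:
`C_0` is the pointwise product, each `C_r` is `ℂ`-bilinear and a differential operator
in each argument, and the total product on `A[[λ]]` is associative. -/
structure IsStarProduct (A : Type*) [CommRing A] [Algebra ℂ A] (C : ℕ → A → A → A) :
    Prop where
  C_zero : ∀ f g, C 0 f g = f * g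
  add_left : ∀ r f f' g, C r (f + f') g = C r f g + C r f' g
  add_right : ∀ r f g g', C r f (g + g') = C r f g + C r f g'
  smul_left : ∀ (r : ℕ) (c : ℂ) f g, C r (c • f) g = c • C r f g
  smul_right : ∀ (r : ℕ) (c : ℂ) f g, C r f (c • g) = c • C r f g
  diff_left : ∀ r g, IsDiffOp (· * ·) fun f => C r f g
  diff_right : ∀ r f, IsDiffOp (· * ·) fun g => C r f g
  assoc : ∀ F G H, starMulC C (starMulC C F G) H = starMulC C F (starMulC C G H)

/-- `P` is a Poisson bracket on the commutative `ℂ`-algebra `A`. -/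
structure IsPoissonBracket (A : Type*) [CommRing A] [Algebra ℂ A] (P : A → A → A) :
    Prop where
  antisymm : ∀ f g, P f g = - P g f
  add_left : ∀ f f' g, P (f + f') g = P f g + P f' g
  smul_left : ∀ (c : ℂ) f g, P (c • f) g = c • P f g
  leibniz : ∀ f g h, P f (g * h) = P f g * h + g * P f h
  jacobi : ∀ f g h, P f (P g h) + P g (P h f) + P h (P f g) = 0

/-- The star product `C` quantizes the Poisson bracket `P`:
`C₁(f,g) − C₁(g,f) = i {f, g}`. -/
def QuantizesPB {A : Type*} [CommRing A] [Algebra ℂ A] (C : ℕ → A → A → A)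
    (P : A → A → A) : Prop :=
  ∀ f g, C 1 f g - C 1 g f = Complex.I • P f g

/-- The star product `C` is Hermitian: `conj (F ⋆ G) = (conj G) ⋆ (conj F)`. -/
def IsHermitianSP {A : Type*} [Ring A] [Star A] (C : ℕ → A → A → A) : Prop :=
  ∀ F G, starSeries (starMulC C F G) = starMulC C (starSeries G) (starSeries F)

/-- The `ℂ[[λ]]`-linear functional `ω = Σᵣ λʳ ωᵣ : A[[λ]] → ℂ[[λ]]` determined by a
family of `ℂ`-linear functionals `ωᵣ : A → ℂ`. -/
noncomputable def extFun {A : Type*} [Ring A] [Module ℂ A] (ω : ℕ → A →ₗ[ℂ] ℂ)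
    (F : PowerSeries A) : PowerSeries ℂ :=
  PowerSeries.mk fun ℓ => ∑ q ∈ Finset.HasAntidiagonal.antidiagonal ℓ, ω q.1 (PowerSeries.coeff q.2 F)

/-- `s ≥ 0` in `ℝ[[λ]] ⊂ ℂ[[λ]]`: all coefficients of `s` are real and `s` is either zero
or its lowest non-vanishing coefficient is positive.  This is the ring ordering of
`ℝ[[λ]]` in which `λ` is positive and infinitesimally small. -/
def IsNonnegSeries (s : PowerSeries ℂ) : Prop :=
  (∀ m, (PowerSeries.coeff m s).im = 0) ∧
    (s = 0 ∨ ∃ N, (∀ m, m < N → PowerSeries.coeff m s = 0) ∧ 0 < (PowerSeries.coeff N s).re)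

/-- The entrywise extension of a family `C_r` of cochains on `A` to matrices,
`(C_r(X,Y))_{ij} = Σ_l C_r(X_{il}, Y_{lj})`. -/
noncomputable def matC {A : Type*} [Ring A] (N : ℕ) (C : ℕ → A → A → A) :
    ℕ → Matrix (Fin N) (Fin N) A → Matrix (Fin N) (Fin N) A → Matrix (Fin N) (Fin N) A :=
  fun r X Y i j => ∑ l, C r (X i l) (Y l j)
/-! ### The bimodule structures on `W` and `W₀`, the degree map, and related notions. -/

/-- Left action of `C^∞(ℝⁿ)` on `W` by `⋆_W`-multiplication with `π*(f)`. -/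
noncomputable def Lw {n : ℕ} (f : Cinf n) (w : Wf n) : Wf n := weylMul (piW f) w

/-- Right action of `C^∞(ℝⁿ)` on `W` by `⋆_W`-multiplication with `π*(f)`. -/
noncomputable def Rw {n : ℕ} (w : Wf n) (f : Cinf n) : Wf n := weylMul w (piW f)

/-- The pointwise (undeformed) action of `C^∞(ℝⁿ)` on `W`. -/
noncomputable def ptSmulW {n : ℕ} (f : Cinf n) (w : Wf n) : Wf n := piW f * w

/-- The pointwise left action of `C^∞(ℝⁿ)` on `W₀`. -/
noncomputable def L0 {n : ℕ} (f : Cinf n) (b : W0 n) : W0 n := piW0 f * b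

/-- The pointwise right action of `C^∞(ℝⁿ)` on `W₀`. -/
noncomputable def R0 {n : ℕ} (b : W0 n) (f : Cinf n) : W0 n := b * piW0 f

/-- A `W`-valued cochain is differential if it is a differential operator in each
argument. -/
def IsDiffCochainW {n k : ℕ} (φ : (Fin k → Cinf n) → Wf n) : Prop :=
  ∀ (f : Fin k → Cinf n) (i : Fin k), IsDiffOp ptSmulW fun x => φ (Function.update f i x)

/-- A `W₀`-valued cochain is differential if it is a differential operator in each
argument. -/
def IsDiffCochain0 {n k : ℕ} (φ : (Fin k → Cinf n) → W0 n) : Prop :=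
  ∀ (f : Fin k → Cinf n) (i : Fin k), IsDiffOp L0 fun x => φ (Function.update f i x)

/-- The involution `φ ↦ φ*` on `W`-valued Hochschild cochains,
`φ*(f₁,…,f_r) = conj (φ (conj f_r, …, conj f₁))`. -/
noncomputable def cochainStar {n r : ℕ} (φ : (Fin r → Cinf n) → Wf n) :
    (Fin r → Cinf n) → Wf n := fun f =>
  starWf (φ fun i => star (f i.rev))

/-- The Euler operator `Σᵢ pᵢ ∂/∂pᵢ` on `W₀`. -/
noncomputable def pEuler {n : ℕ} (b : W0 n) : W0 n :=
  ∑ i : Fin n, MvPowerSeries.X i * Dp i b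

/-- The degree map `deg = Σᵢ pᵢ ∂/∂pᵢ + λ ∂/∂λ` on `W`. -/
noncomputable def degW {n : ℕ} (w : Wf n) : Wf n :=
  PowerSeries.mk fun ℓ =>
    ℓ • PowerSeries.coeff ℓ w + pEuler (PowerSeries.coeff ℓ w)

/-- `w ∈ W` is homogeneous of degree `k` with respect to `deg`. -/
def IsDegHomogElem {n : ℕ} (k : ℕ) (w : Wf n) : Prop := degW w = k • w

/-- A map `τ : C^∞(ℝⁿ) → W` is homogeneous of degree `k` with respect to `deg`. -/
def IsDegHomog {n : ℕ} (k : ℕ) (τ : Cinf n → Wf n) : Prop :=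
  ∀ f, degW (τ f) = k • τ f

/-- `τ : C^∞(ℝⁿ) → W` is an element of `HC¹(C^∞(ℝⁿ), W)`: it is `ℂ`-linear and a
differential operator. -/
def IsHC1 {n : ℕ} (τ : Cinf n → Wf n) : Prop :=
  (∀ f g, τ (f + g) = τ f + τ g) ∧ (∀ (c : ℂ) (f : Cinf n), τ (c • f) = c • τ f) ∧
    IsDiffOp ptSmulW τ

/-- `w ∈ W` lies in the part of `deg`-degree at least `N` (all components of total
degree `< N` in the `pᵢ` and `λ` vanish).  Used to express convergence of the series
`Σₖ τₖ` in the `deg`-adic topology. -/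
def degOrderGE {n : ℕ} (N : ℕ) (w : Wf n) : Prop :=
  ∀ (ℓ : ℕ) (m : Fin n →₀ ℕ),
    (m.sum fun _ e => e) + ℓ < N → PowerSeries.coeff ℓ w m = 0

/-- The component of `w ∈ W` of `deg`-degree exactly `d`. -/
noncomputable def degComp {n : ℕ} (d : ℕ) (w : Wf n) : Wf n :=
  PowerSeries.mk fun ℓ =>
    (fun m => if (m.sum fun _ e => e) + ℓ = d then PowerSeries.coeff ℓ w m else 0 :
      W0 n)

/-- The `λ`-linear extension of the finite sum `τ₀ + ⋯ + τ_{k−1}` to a map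
`C^∞(ℝⁿ)[[λ]] → W`. -/
noncomputable def extSum {n : ℕ} (τ : ℕ → Cinf n → Wf n) (k : ℕ)
    (F : PowerSeries (Cinf n)) : Wf n :=
  PowerSeries.mk fun ℓ => ∑ q ∈ Finset.HasAntidiagonal.antidiagonal ℓ, ∑ i ∈ Finset.range k,
    PowerSeries.coeff q.1 (τ i (PowerSeries.coeff q.2 F))

/-- The `λ`-linear (that is, `ℂ[[λ]]`-linear) extension
`π* : C^∞(ℝⁿ)[[λ]] → W` of the natural inclusion. -/
noncomputable def piHat {n : ℕ} (F : PowerSeries (Cinf n)) : Wf n :=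
  PowerSeries.map (MvPowerSeries.C : Cinf n →+* W0 n) F

/-- The canonical Poisson bracket `{a,b} = Σₖ (∂a/∂qᵏ ∂b/∂pₖ − ∂a/∂pₖ ∂b/∂qᵏ)` on the
formal cotangent bundle, i.e. on `W₀`. -/
noncomputable def pbCan {n : ℕ} (a b : W0 n) : W0 n :=
  ∑ k : Fin n, (Dq k a * Dp k b - Dp k a * Dq k b)

/-- The cochain
`R_k(f,g) = Σ_{i=0}^{k−1} λ^{k−i} τ_i(C_{k−i}(f,g)) − Σ_{i=1}^{k−1} τ_i(f) ⋆_W τ_{k−i}(g)`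
appearing in the recursive construction of `τ`. -/
noncomputable def Rcochain {n : ℕ} (C : ℕ → Cinf n → Cinf n → Cinf n)
    (τ : ℕ → Cinf n → Wf n) (k : ℕ) (f g : Cinf n) : Wf n :=
  (∑ i ∈ Finset.range k, lamSmulW (PowerSeries.X ^ (k - i)) (τ i (C (k - i) f g)))
    - ∑ i ∈ Finset.Ioo 0 k, weylMul (τ i f) (τ (k - i) g)


/-!
Complex conjugation is a ring automorphism of `W` fixing `λ` and the `pₖ` and commuting with
`∂_{qᵏ}` and `∂_{pₖ}`. Since `i` is imaginary it reverses the Weyl–Moyal product,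
`conj (a ⋆_W b) = conj b ⋆_W conj a`: conjugating `(i/2)ʳ` produces the sign `(-1)ʳ`, which is
also the sign by which `μ ∘ Pʳ` changes when its arguments are swapped. Hermiticity of `⋆` gives
`conj C_r(f, g) = C_r(conj g, conj f)`. Conjugating `R_k(conj g, conj f)` term by term and using
`τ_i* = τ_i` then returns the first sum of `R_k(f, g)` unchanged and the second one reindexed
by `i ↦ k − i`.
-/

section Conjugation

variable {n : ℕ}

instance : StarModule ℂ (Cinf n) where
  star_smul c f := Subtype.ext <| funext fun x => by
    change (starRingEnd ℂ) (c * f.1 x) = star c * (starRingEnd ℂ) (f.1 x)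
    rw [map_mul]
    rfl

lemma star_pderivQ (k : Fin n) (f : Cinf n) : star (pderivQ k f) = pderivQ k (star f) := by
  refine Subtype.ext <| funext fun x => ?_
  have hf : DifferentiableAt ℝ f.1 x := (f.smooth.differentiable (by norm_cast)).differentiableAt
  have hconj : (star f : Cinf n).1 = Complex.conjCLE.toContinuousLinearMap ∘ f.1 := rfl
  change (starRingEnd ℂ) (fderiv ℝ f.1 x (Pi.single k 1))
    = fderiv ℝ (star f : Cinf n).1 x (Pi.single k 1)
  rw [hconj, fderiv_comp x Complex.conjCLE.toContinuousLinearMap.differentiableAt hf,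
    ContinuousLinearMap.fderiv]
  rfl

lemma starW0_eq_map (a : W0 n) : starW0 a = MvPowerSeries.map (starRingEnd (Cinf n)) a := rfl

lemma starWf_eq_map (w : Wf n) :
    starWf w = PowerSeries.map (MvPowerSeries.map (starRingEnd (Cinf n))) w := by
  ext ℓ : 1
  simp only [starWf, PowerSeries.coeff_mk, PowerSeries.coeff_map, starW0_eq_map]

lemma coeff_starWf (ℓ : ℕ) (w : Wf n) :
    PowerSeries.coeff ℓ (starWf w) = starW0 (PowerSeries.coeff ℓ w) :=
  PowerSeries.coeff_mk _ _

lemma starWf_lamSmulW_X_pow (m : ℕ) (w : Wf n) :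
    starWf (lamSmulW (PowerSeries.X ^ m) w) = lamSmulW (PowerSeries.X ^ m) (starWf w) := by
  simp only [lamSmulW, starWf_eq_map, map_mul, map_pow, PowerSeries.map_X]

lemma starW0_smul (c : ℂ) (a : W0 n) : starW0 (c • a) = star c • starW0 a :=
  funext fun m => star_smul c (a m)

lemma starW0_Dq (k : Fin n) (a : W0 n) : starW0 (Dq k a) = Dq k (starW0 a) :=
  funext fun m => star_pderivQ k (a m)

lemma starW0_Dp (k : Fin n) (a : W0 n) : starW0 (Dp k a) = Dp k (starW0 a) :=
  funext fun _ => star_nsmul _ _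

lemma starW0_iterFst {r : ℕ} (t : Fin r → Fin n × Bool) (a : W0 n) :
    starW0 (iterFst t a) = iterFst t (starW0 a) := by
  refine (List.foldr_hom starW0 fun ⟨k, b⟩ x => ?_).symm
  cases b
  exacts [(starW0_Dp k x).symm, (starW0_Dq k x).symm]

lemma starW0_iterSnd {r : ℕ} (t : Fin r → Fin n × Bool) (a : W0 n) :
    starW0 (iterSnd t a) = iterSnd t (starW0 a) := by
  refine (List.foldr_hom starW0 fun ⟨k, b⟩ x => ?_).symm
  cases b
  exacts [(starW0_Dq k x).symm, (starW0_Dp k x).symm]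

lemma starW0_moyalP (r : ℕ) (a b : W0 n) :
    starW0 (moyalP r a b) = moyalP r (starW0 a) (starW0 b) := by
  have hsign : ∀ kb : Fin n × Bool, star (pSign kb) = pSign kb := fun ⟨_, b⟩ => by
    cases b <;> simp [pSign]
  unfold moyalP
  rw [starW0_eq_map, map_sum]
  refine Finset.sum_congr rfl fun t _ => ?_
  rw [← starW0_eq_map, starW0_smul, starW0_eq_map, map_mul, ← starW0_eq_map, ← starW0_eq_map,
    starW0_iterFst, starW0_iterSnd, star_prod]
  simp only [hsign]

end Conjugation

section WeylMoyal

variable {n : ℕ}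

/-- Flipping the `Bool` exchanges the summands `∂_{qᵏ} ⊗ ∂_{pₖ}` and `∂_{pₖ} ⊗ ∂_{qᵏ}` of `P`. -/
def swapFactors : Fin n × Bool ≃ Fin n × Bool := Equiv.prodCongr (Equiv.refl _) Equiv.boolNot

lemma iterFst_swapFactors {r : ℕ} (t : Fin r → Fin n × Bool) (a : W0 n) :
    iterFst (swapFactors ∘ t) a = iterSnd t a := by
  unfold iterFst iterSnd
  rw [← List.map_ofFn, List.foldr_map]
  congr 1
  funext ⟨k, b⟩ x
  cases b <;> rfl

lemma iterSnd_swapFactors {r : ℕ} (t : Fin r → Fin n × Bool) (a : W0 n) :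
    iterSnd (swapFactors ∘ t) a = iterFst t a := by
  unfold iterFst iterSnd
  rw [← List.map_ofFn, List.foldr_map]
  congr 1
  funext ⟨k, b⟩ x
  cases b <;> rfl

lemma pSign_swapFactors (kb : Fin n × Bool) : pSign (swapFactors kb) = -pSign kb := by
  obtain ⟨k, b⟩ := kb
  cases b <;> simp [pSign, swapFactors]

lemma moyalP_comm (r : ℕ) (a b : W0 n) : moyalP r b a = (-1 : ℂ) ^ r • moyalP r a b := by
  unfold moyalP
  rw [Finset.smul_sum]
  refine Fintype.sum_equiv (Equiv.piCongrRight fun _ => swapFactors) _ _ fun t => ?_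
  change _ = _ • (∏ j, pSign (swapFactors (t j))) • (iterFst (swapFactors ∘ t) a
    * iterSnd (swapFactors ∘ t) b)
  rw [iterFst_swapFactors, iterSnd_swapFactors, mul_comm (iterSnd t a)]
  simp only [pSign_swapFactors, Finset.prod_neg, Finset.card_univ, Fintype.card_fin, smul_smul,
    ← mul_assoc, ← mul_pow, neg_one_mul, neg_neg, one_pow, one_mul]

lemma star_moyal_coeff_mul_neg_one_pow (m : ℕ) :
    star ((Complex.I / 2) ^ m / m.factorial) * (-1) ^ m = (Complex.I / 2) ^ m / m.factorial := by
  have hI : star (Complex.I / 2) = -(Complex.I / 2) := by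
    rw [star_div₀, Complex.star_def, Complex.conj_I, map_ofNat, neg_div]
  rw [star_div₀, star_pow, hI, neg_pow, Complex.star_def, Complex.conj_natCast,
    div_mul_eq_mul_div, mul_right_comm, ← mul_pow, neg_one_mul, neg_neg, one_pow, one_mul]

lemma starWf_weylMul (a b : Wf n) : starWf (weylMul a b) = weylMul (starWf b) (starWf a) := by
  ext ℓ : 1
  simp only [weylMul, coeff_starWf, PowerSeries.coeff_mk, starW0_eq_map, map_sum]
  refine Finset.sum_congr rfl fun p _ => ?_
  rw [← Finset.Nat.sum_antidiagonal_swap]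
  refine Finset.sum_congr rfl fun q _ => ?_
  rw [← starW0_eq_map, starW0_smul, starW0_moyalP, moyalP_comm, smul_smul,
    star_moyal_coeff_mul_neg_one_pow]
  rfl

end WeylMoyal

namespace IsStarProduct

variable {A : Type*} [CommRing A] [Algebra ℂ A] {C : ℕ → A → A → A}

lemma zero_left (hC : IsStarProduct A C) (r : ℕ) (g : A) : C r 0 g = 0 := by
  simpa using hC.add_left r 0 0 g

lemma zero_right (hC : IsStarProduct A C) (r : ℕ) (f : A) : C r f 0 = 0 := by
  simpa using hC.add_right r f 0 0

lemma coeff_starMulC_C (hC : IsStarProduct A C) (r : ℕ) (f g : A) :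
    PowerSeries.coeff r (starMulC C (PowerSeries.C f) (PowerSeries.C g)) = C r f g := by
  rw [starMulC, PowerSeries.coeff_mk, Finset.sum_eq_single (r, 0)]
  · simp
  · intro p hp hpr
    rw [Finset.HasAntidiagonal.mem_antidiagonal] at hp
    have hp2 : p.2 ≠ 0 := fun h => hpr (Prod.ext (by omega) h)
    refine Finset.sum_eq_zero fun q hq => ?_
    rw [Finset.HasAntidiagonal.mem_antidiagonal] at hq
    by_cases hq1 : q.1 = 0
    · rw [PowerSeries.coeff_C q.2, if_neg (by omega), hC.zero_right]
    · rw [PowerSeries.coeff_C q.1, if_neg hq1, hC.zero_left]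
  · simp

end IsStarProduct

lemma starSeries_C {A : Type*} [Semiring A] [StarAddMonoid A] (f : A) :
    starSeries (PowerSeries.C f) = PowerSeries.C (star f) := by
  ext ℓ : 1
  rw [starSeries, PowerSeries.coeff_mk, PowerSeries.coeff_C, PowerSeries.coeff_C]
  split_ifs <;> simp

/-- Compare the `λʳ`-coefficients of `conj (f ⋆ g) = conj g ⋆ conj f` for `f, g` constant in `λ`. -/
lemma IsHermitianSP.star_apply {A : Type*} [CommRing A] [StarRing A] [Algebra ℂ A]
    {C : ℕ → A → A → A} (hC : IsStarProduct A C) (hherm : IsHermitianSP C) (r : ℕ) (f g : A) :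
    star (C r f g) = C r (star g) (star f) := by
  have h := congrArg (PowerSeries.coeff r) (hherm (PowerSeries.C f) (PowerSeries.C g))
  rwa [starSeries_C, starSeries_C, starSeries, PowerSeries.coeff_mk, hC.coeff_starMulC_C,
    hC.coeff_starMulC_C] at h

lemma Finset.sum_Ioo_zero_swap_sub {M : Type*} [AddCommMonoid M] (F : ℕ → ℕ → M) (k : ℕ) :
    ∑ i ∈ Finset.Ioo 0 k, F (k - i) i = ∑ i ∈ Finset.Ioo 0 k, F i (k - i) := by
  refine Finset.sum_nbij' (k - ·) (k - ·) ?_ ?_ ?_ ?_ ?_ <;>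
    intro i hi <;> simp only [Finset.mem_Ioo] at hi ⊢
  · omega
  · omega
  · omega
  · omega
  · rw [Nat.sub_sub_self hi.2.le]

theorem Rk_hermitian_general {n : ℕ} (C : ℕ → Cinf n → Cinf n → Cinf n)
    (hC : IsStarProduct (Cinf n) C) (hherm : IsHermitianSP C)
    (k : ℕ) (τ : ℕ → Cinf n → Wf n)
    (hτstar : ∀ i, i < k → ∀ f : Cinf n, starWf (τ i (star f)) = τ i f) :
    ∀ f g : Cinf n, starWf (Rcochain C τ k (star g) (star f)) = Rcochain C τ k f g := by
  intro f g
  have hcochain : ∀ i ∈ Finset.range k,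
      starWf (lamSmulW (PowerSeries.X ^ (k - i)) (τ i (C (k - i) (star g) (star f))))
        = lamSmulW (PowerSeries.X ^ (k - i)) (τ i (C (k - i) f g)) := fun i hi => by
    rw [starWf_lamSmulW_X_pow, ← hherm.star_apply hC, hτstar i (Finset.mem_range.mp hi)]
  have hweyl : ∀ i ∈ Finset.Ioo 0 k,
      starWf (weylMul (τ i (star g)) (τ (k - i) (star f))) = weylMul (τ (k - i) f) (τ i g) :=
    fun i hi => by
      obtain ⟨hi0, hik⟩ := Finset.mem_Ioo.mp hi
      rw [starWf_weylMul, hτstar (k - i) (by omega), hτstar i hik]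
  rw [Rcochain, starWf_eq_map, map_sub, map_sum, map_sum]
  simp only [← starWf_eq_map]
  rw [Finset.sum_congr rfl hcochain, Finset.sum_congr rfl hweyl,
    Finset.sum_Ioo_zero_swap_sub (fun i j => weylMul (τ i f) (τ j g)), Rcochain]

/-- If `⋆` is a Hermitian star product, `τ₀ = π*` and
`τ₁,…,τ_{k−1} ∈ HC¹` satisfy `τ_i* = τ_i` (where `φ*(f) = conj(φ(conj f))`), then the
cochain `R_k` is Hermitian: `R_k*(f,g) = conj(R_k(conj g, conj f)) = R_k(f,g)`. -/
theorem Rk_hermitian {n : ℕ} (C : ℕ → Cinf n → Cinf n → Cinf n)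
    (hC : IsStarProduct (Cinf n) C) (hherm : IsHermitianSP C)
    (k : ℕ) (hk : 1 ≤ k) (τ : ℕ → Cinf n → Wf n)
    (hτ0 : τ 0 = piW)
    (hτ : ∀ i, i < k → IsHC1 (τ i))
    (hτstar : ∀ i, i < k → ∀ f : Cinf n, starWf (τ i (star f)) = τ i f) :
    ∀ f g : Cinf n, starWf (Rcochain C τ k (star g) (star f)) = Rcochain C τ k f g :=
  Rk_hermitian_general C hC hherm k τ hτstar
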